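/- arXiv:1511.03341 — 3 statements merged into one kernel-verified Lean document; each statement's English description precedes it below -/
import Mathlib

section
/- Let f and its Yosida transforms f_λ be as in the previous item, with f continuous in (x,u) uniformly controlled by the factor (1+|b|+|ξ|). Then the approximation f_λ ↓ f is uniform on compacts in the following sense: for every compact K ⊂ Ω × ℝ^d and every δ > 0, there exists λ > 0 such that f(x,u,b,ξ) ≤ f_λ(x,u,b,ξ) ≤ f(x,u,b,ξ) + δ(1 + |b| + |ξ|) for all (x,u) ∈ K and all (b,ξ) ∈ ℝ^m × ℝ^(d×N). -/
open Filter

/-- The Yosida transform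
`f_λ(x,u,b,ξ) := sup_{(x',u') ∈ Ω×ℝ^d} { f(x',u',b,ξ) - λC(‖x-x'‖+‖u-u'‖)(1+‖b‖+‖ξ‖) }`. -/
noncomputable def yosida {N d m : ℕ}
    (Ω : Set (EuclideanSpace ℝ (Fin N))) (C : ℝ)
    (f : EuclideanSpace ℝ (Fin N) → EuclideanSpace ℝ (Fin d) →
      EuclideanSpace ℝ (Fin m) →
      (EuclideanSpace ℝ (Fin N) →L[ℝ] EuclideanSpace ℝ (Fin d)) → ℝ)
    (lam : ℝ) (x : EuclideanSpace ℝ (Fin N)) (u : EuclideanSpace ℝ (Fin d))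
    (b : EuclideanSpace ℝ (Fin m))
    (ξ : EuclideanSpace ℝ (Fin N) →L[ℝ] EuclideanSpace ℝ (Fin d)) : ℝ :=
  sSup {r : ℝ | ∃ x' ∈ Ω, ∃ u' : EuclideanSpace ℝ (Fin d),
    r = f x' u' b ξ - lam * C * (‖x - x'‖ + ‖u - u'‖) * (1 + ‖b‖ + ‖ξ‖)}

/-- the Yosida approximation `f_λ ↓ f` is uniform on compact subsets of
`Ω × ℝ^d`, with error controlled by `δ(1+‖b‖+‖ξ‖)`. -/
theorem yosida_uniform_on_compacts {N d m : ℕ}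
    (Ω : Set (EuclideanSpace ℝ (Fin N))) (hΩo : IsOpen Ω)
    (hΩb : Bornology.IsBounded Ω) (hΩne : Ω.Nonempty)
    (C : ℝ) (hC : 0 < C)
    (f : EuclideanSpace ℝ (Fin N) → EuclideanSpace ℝ (Fin d) →
      EuclideanSpace ℝ (Fin m) →
      (EuclideanSpace ℝ (Fin N) →L[ℝ] EuclideanSpace ℝ (Fin d)) → ℝ)
    (hf_cont : ∀ b ξ, Continuous (fun q :
        EuclideanSpace ℝ (Fin N) × EuclideanSpace ℝ (Fin d) => f q.1 q.2 b ξ))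
    (hf_nonneg : ∀ x u b ξ, 0 ≤ f x u b ξ)
    (hf_ub : ∀ x u b ξ, f x u b ξ ≤ C * (1 + ‖b‖ + ‖ξ‖))
    -- uniform continuity in `(x,u)` on compacts, with weight `(1+‖b‖+‖ξ‖)`
    (hf_mod : ∀ K : Set (EuclideanSpace ℝ (Fin N) × EuclideanSpace ℝ (Fin d)),
      IsCompact K → K ⊆ Ω ×ˢ Set.univ →
      ∃ ω : ℝ → ℝ, Continuous ω ∧ ω 0 = 0 ∧
        ∀ x u x' u', (x, u) ∈ K → (x', u') ∈ K → ∀ b ξ,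
          |f x u b ξ - f x' u' b ξ| ≤
            ω (‖x - x'‖ + ‖u - u'‖) * (1 + ‖b‖ + ‖ξ‖)) :
    ∀ K : Set (EuclideanSpace ℝ (Fin N) × EuclideanSpace ℝ (Fin d)),
      IsCompact K → K ⊆ Ω ×ˢ Set.univ →
      ∀ δ : ℝ, 0 < δ →
      ∃ lam : ℝ, 0 < lam ∧ ∀ x u, (x, u) ∈ K → ∀ b ξ,
        f x u b ξ ≤ yosida Ω C f lam x u b ξ ∧
          yosida Ω C f lam x u b ξ ≤ f x u b ξ + δ * (1 + ‖b‖ + ‖ξ‖) := by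
  intro K hK hKΩ δ hδ
  have hK1 : IsCompact (Prod.fst '' K) := hK.image continuous_fst
  have hK2 : IsCompact (Prod.snd '' K) := hK.image continuous_snd
  have hK1Ω : Prod.fst '' K ⊆ Ω := by
    rintro _ ⟨p, hp, rfl⟩; exact (hKΩ hp).1
  obtain ⟨ε, hε, hεΩ⟩ := hK1.exists_cthickening_subset_open hΩo hK1Ω
  set K' : Set (EuclideanSpace ℝ (Fin N) × EuclideanSpace ℝ (Fin d)) :=
    Metric.cthickening ε (Prod.fst '' K) ×ˢ Metric.cthickening ε (Prod.snd '' K) with hK'def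
  have hK'c : IsCompact K' := (hK1.cthickening).prod (hK2.cthickening)
  have hK'Ω : K' ⊆ Ω ×ˢ Set.univ := fun p hp => ⟨hεΩ hp.1, trivial⟩
  obtain ⟨ω, hωc, hω0, hωmod⟩ := hf_mod K' hK'c hK'Ω
  obtain ⟨η, hη, hηδ⟩ : ∃ η > 0, ∀ t : ℝ, |t| < η → |ω t| < δ := by
    have h := Metric.continuousAt_iff.mp (hωc.continuousAt (x := 0))
    obtain ⟨η, hη, h⟩ := h δ hδ
    refine ⟨η, hη, fun t ht => ?_⟩
    have := h (x := t) (by simpa [Real.dist_eq] using ht)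
    simpa [Real.dist_eq, hω0] using this
  obtain ⟨η', hη'val⟩ : ∃ η' : ℝ, η' = min η ε := ⟨_, rfl⟩
  have hη' : 0 < η' := hη'val ▸ lt_min hη hε
  have hη'η : η' ≤ η := hη'val ▸ min_le_left η ε
  have hη'ε : η' ≤ ε := hη'val ▸ min_le_right η ε
  refine ⟨1 / η', by positivity, fun x u hxu b ξ => ?_⟩
  obtain ⟨W, hW⟩ : ∃ W : ℝ, W = 1 + ‖b‖ + ‖ξ‖ := ⟨_, rfl⟩
  have hW1 : (1:ℝ) ≤ W := by
    rw [hW]; linarith [norm_nonneg b, norm_nonneg ξ]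
  have hW0 : (0:ℝ) < W := lt_of_lt_of_le one_pos hW1
  have hxΩ : x ∈ Ω := (hKΩ hxu).1
  simp only [yosida, ← hW]
  set S : Set ℝ := {r : ℝ | ∃ x' ∈ Ω, ∃ u' : EuclideanSpace ℝ (Fin d),
    r = f x' u' b ξ - 1 / η' * C * (‖x - x'‖ + ‖u - u'‖) * W} with hS
  have hmem : f x u b ξ ∈ S := ⟨x, hxΩ, u, by simp⟩
  have hub : ∀ r ∈ S, r ≤ f x u b ξ + δ * W := by
    rintro r ⟨x', hx'Ω, u', rfl⟩
    obtain ⟨D, hDdef⟩ : ∃ D : ℝ, D = ‖x - x'‖ + ‖u - u'‖ := ⟨_, rfl⟩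
    rw [← hDdef]
    have hD0 : 0 ≤ D := by rw [hDdef]; positivity
    have hx1 : ‖x - x'‖ ≤ D := by
      rw [hDdef]; linarith [norm_nonneg (u - u')]
    have hu1 : ‖u - u'‖ ≤ D := by
      rw [hDdef]; linarith [norm_nonneg (x - x')]
    rcases lt_or_ge D η' with hcase | hcase
    · -- close: use the modulus
      have hxK' : (x, u) ∈ K' :=
        ⟨Metric.self_subset_cthickening _ ⟨(x, u), hxu, rfl⟩,
         Metric.self_subset_cthickening _ ⟨(x, u), hxu, rfl⟩⟩
      have hx'K' : (x', u') ∈ K' := by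
        constructor
        · refine Metric.mem_cthickening_of_dist_le x' x ε _ ⟨(x, u), hxu, rfl⟩ ?_
          rw [dist_eq_norm, norm_sub_rev]; linarith
        · refine Metric.mem_cthickening_of_dist_le u' u ε _ ⟨(x, u), hxu, rfl⟩ ?_
          rw [dist_eq_norm, norm_sub_rev]; linarith
      have hmod := hωmod x' u' x u hx'K' hxK' b ξ
      have hωeq : ω (‖x' - x‖ + ‖u' - u‖) = ω D := by
        rw [hDdef, norm_sub_rev x' x, norm_sub_rev u' u]
      rw [hωeq, ← hW] at hmod
      have hωD : ω D < δ := by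
        have : |D| < η := by rw [abs_of_nonneg hD0]; linarith
        exact lt_of_abs_lt (hηδ D this)
      have hfle : f x' u' b ξ - f x u b ξ ≤ ω D * W := le_trans (le_abs_self _) hmod
      have hωW : ω D * W ≤ δ * W := by nlinarith
      have hsub : 0 ≤ 1 / η' * C * D * W := by positivity
      linarith
    · -- far: the penalty dominates
      have h2 : (1:ℝ) ≤ 1 / η' * D := by
        rw [div_mul_eq_mul_div, one_mul, le_div_iff₀ hη']; linarith
      have h1 : C * W ≤ 1 / η' * C * D * W := by
        have h3 : 1 * (C * W) ≤ (1 / η' * D) * (C * W) :=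
          mul_le_mul_of_nonneg_right h2 (by positivity)
        nlinarith [h3]
      have hub' := hf_ub x' u' b ξ
      rw [← hW] at hub'
      have hfnn := hf_nonneg x u b ξ
      have hδW : 0 < δ * W := by positivity
      linarith
  have hbdd : BddAbove S := ⟨f x u b ξ + δ * W, fun r hr => hub r hr⟩
  exact ⟨le_csSup hbdd hmem, csSup_le ⟨_, hmem⟩ hub⟩
end

section
/- Let 1 < p < ∞ and let φ ∈ L^p(Q;ℝ^m) with ∫_Q φ dx = 0, extended periodically in the first N-1 variables. Define w_k(x) := (2k+1)^{1/p} φ((2k+1)x) for |x_N| ≤ 1/(2(2k+1)) and w_k(x) := 0 otherwise. Then {w_k} is bounded in L^p(Q;ℝ^m) and w_k ⇀ 0 weakly in L^p(Q;ℝ^m) as k → ∞. -/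
/-!
Write `c = 2k + 1`. The substitution `y = c x` maps the slab `{|x_N| ≤ 1/(2c)} ∩ Q` onto a box
which, up to null hyperplanes, is the union of the `c^N` integer translates of `Q` in the periodic
directions; this factor, the amplitude `(c^{1/p})^p = c` and the Jacobian `c^{-(N+1)}` cancel, so
`‖w_k‖_{L^p(Q)} = ‖φ‖_{L^p(Q)}` for every `k`. Weak convergence holds for any bounded sequence in
`L^p` supported on sets `S_k` of vanishing measure: by Hölder,
`|∫ ⟪w_k, g⟫| ≤ ‖w_k‖_p ‖g 1_{S_k}‖_q`, and the last factor tends to zero because `q < ∞`.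
-/

open MeasureTheory Filter Set Topology
open scoped RealInnerProductSpace ENNReal

section Lp

variable {ι α : Type*} [MeasurableSpace α] {μ : Measure α} {p q : ℝ≥0∞} {l : Filter ι}

theorem MeasureTheory.MemLp.tendsto_eLpNorm_indicator {E : Type*} [NormedAddCommGroup E]
    {g : α → E} (hq_one : 1 ≤ q) (hq : q ≠ ∞) (hg : MemLp g q μ) {S : ι → Set α}
    (hS : ∀ i, MeasurableSet (S i)) (hμS : Tendsto (μ ∘ S) l (𝓝 0)) :
    Tendsto (fun i => eLpNorm ((S i).indicator g) q μ) l (𝓝 0) := by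
  refine ENNReal.tendsto_nhds_zero.2 fun ε hε => ?_
  obtain rfl | hε_top := eq_or_ne ε ∞
  · exact Eventually.of_forall fun _ => le_top
  obtain ⟨δ, hδ, hδS⟩ :=
    hg.eLpNorm_indicator_le hq_one hq (ENNReal.toReal_pos hε.ne' hε_top)
  filter_upwards [ENNReal.tendsto_nhds_zero.1 hμS _ (ENNReal.ofReal_pos.2 hδ)] with i hi
  simpa [ENNReal.ofReal_toReal hε_top] using hδS _ (hS i) hi

variable {E : Type*} [NormedAddCommGroup E] [InnerProductSpace ℝ E]

theorem enorm_integral_inner_le [p.HolderConjugate q] {f g : α → E}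
    (hf : AEStronglyMeasurable f μ) (hg : AEStronglyMeasurable g μ) :
    ‖∫ x, ⟪f x, g x⟫ ∂μ‖ₑ ≤ eLpNorm f p μ * eLpNorm g q μ := by
  calc ‖∫ x, ⟪f x, g x⟫ ∂μ‖ₑ ≤ eLpNorm (fun x => ⟪f x, g x⟫) 1 μ := by
        rw [eLpNorm_one_eq_lintegral_enorm]; exact enorm_integral_le_lintegral_enorm _
    _ ≤ 1 * eLpNorm f p μ * eLpNorm g q μ :=
        eLpNorm_le_eLpNorm_mul_eLpNorm_of_nnnorm hf hg _ 1
          (.of_forall fun x => by simpa using nnnorm_inner_le_nnnorm (f x) (g x))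
    _ = eLpNorm f p μ * eLpNorm g q μ := by simp

theorem tendsto_integral_inner_zero_of_support_subset [p.HolderConjugate q] (hq : q ≠ ∞)
    {f : ι → α → E} {g : α → E} {S : ι → Set α} {C : ℝ≥0∞} (hC : C ≠ ∞)
    (hf : ∀ i, AEStronglyMeasurable (f i) μ) (hf_bdd : ∀ i, eLpNorm (f i) p μ ≤ C)
    (hf_supp : ∀ i, Function.support (f i) ⊆ S i) (hS : ∀ i, MeasurableSet (S i))
    (hμS : Tendsto (μ ∘ S) l (𝓝 0)) (hg : MemLp g q μ) :
    Tendsto (fun i => ∫ x, ⟪f i x, g x⟫ ∂μ) l (𝓝 0) := by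
  have hbound (i : ι) :
      ‖∫ x, ⟪f i x, g x⟫ ∂μ‖ₑ ≤ C * eLpNorm ((S i).indicator g) q μ := by
    have hloc : (fun x => ⟪f i x, g x⟫) = fun x => ⟪f i x, (S i).indicator g x⟫ := by
      ext x
      by_cases hx : x ∈ S i
      · simp [hx]
      · simp [hx, Function.notMem_support.1 fun h => hx (hf_supp i h)]
    rw [hloc]
    exact (enorm_integral_inner_le (hf i) (hg.1.indicator (hS i))).trans
      (mul_le_mul_left (hf_bdd i) _)
  have hlim : Tendsto (fun i => C * eLpNorm ((S i).indicator g) q μ) l (𝓝 0) := by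
    simpa using ENNReal.Tendsto.const_mul
      (hg.tendsto_eLpNorm_indicator (ENNReal.HolderConjugate.one_le q p) hq hS hμS) (.inr hC)
  exact tendsto_zero_iff_enorm_tendsto_zero.2
    (tendsto_of_tendsto_of_tendsto_of_le_of_le tendsto_const_nhds hlim (fun _ => zero_le) hbound)

theorem integral_norm_rpow_eq_toReal_lintegral {α E : Type*} [MeasurableSpace α] {μ : Measure α}
    [NormedAddCommGroup E] {f : α → E} {p : ℝ} (hp : 0 ≤ p)
    (hf : AEStronglyMeasurable f μ) :
    ∫ x, ‖f x‖ ^ p ∂μ = (∫⁻ x, ‖f x‖ₑ ^ p ∂μ).toReal := by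
  rw [← integral_toReal (hf.enorm.pow_const p)
    (.of_forall fun _ => ENNReal.rpow_lt_top_of_nonneg hp enorm_ne_top)]
  simp only [← ENNReal.toReal_rpow, toReal_enorm]

theorem setLIntegral_comp_smul_preimage {E : Type*} [NormedAddCommGroup E] [NormedSpace ℝ E]
    [MeasurableSpace E] [BorelSpace E] [FiniteDimensional ℝ E] (μ : Measure E)
    [μ.IsAddHaarMeasure] {c : ℝ} (hc : c ≠ 0) (H : E → ℝ≥0∞) (A : Set E) :
    ∫⁻ x in (c • ·) ⁻¹' A, H (c • x) ∂μ =
      ENNReal.ofReal |(c ^ Module.finrank ℝ E)⁻¹| * ∫⁻ y in A, H y ∂μ := by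
  have hemb : MeasurableEmbedding (c • · : E → E) :=
    (Homeomorph.smulOfNeZero c hc).measurableEmbedding
  rw [← hemb.lintegral_map, ← hemb.restrict_map, Measure.map_addHaar_smul μ hc,
    Measure.restrict_smul, lintegral_smul_measure, smul_eq_mul]

end Lp

section Boxes

variable {n : ℕ}

def centeredBox (b : Fin n → ℝ) : Set (EuclideanSpace ℝ (Fin n)) := {y | ∀ i, |y i| < b i}

theorem measurableSet_centeredBox (b : Fin n → ℝ) : MeasurableSet (centeredBox b) := by
  simp only [centeredBox, ofPred_forall]
  exact .iInter fun i => measurableSet_lt (by fun_prop) measurable_const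

theorem mem_centeredBox_update {b : Fin n → ℝ} {j : Fin n} {r : ℝ}
    {y : EuclideanSpace ℝ (Fin n)} :
    y ∈ centeredBox (Function.update b j r) ↔ |y j| < r ∧ ∀ i ≠ j, |y i| < b i :=
  Function.forall_update_iff b (p := fun i x => |y i| < x)

theorem mem_preimage_sub_centeredBox {b : Fin n → ℝ} {j : Fin n} {t : ℝ}
    {y : EuclideanSpace ℝ (Fin n)} :
    y ∈ (· - t • EuclideanSpace.single j 1) ⁻¹' centeredBox b ↔
      |y j - t| < b j ∧ ∀ i ≠ j, |y i| < b i := by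
  refine ⟨fun hy => ⟨by simpa using hy j, fun i hi => by simpa [hi] using hy i⟩, ?_⟩
  rintro ⟨hj, hb⟩ i
  by_cases hi : i = j
  · subst hi; simpa using hj
  · simpa [hi] using hb i hi

theorem ae_apply_ne (i : Fin n) (a : ℝ) : ∀ᵐ y : EuclideanSpace ℝ (Fin n), y i ≠ a := by
  refine measure_eq_zero_iff_ae_notMem.1 ?_
  rw [← Measure.pi_hyperplane (fun _ : Fin n => (volume : Measure ℝ)) i a, ← volume_pi]
  exact (PiLp.volume_preserving_ofLp (Fin n)).measure_preimage
    (measurableSet_eq_fun (measurable_pi_apply i) measurable_const).nullMeasurableSet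

theorem volume_centeredBox_lt_top (b : Fin n → ℝ) : volume (centeredBox b) < ∞ := by
  have : centeredBox b = WithLp.ofLp ⁻¹' univ.pi fun i => Ioo (-b i) (b i) := by
    ext y; simp [centeredBox, abs_lt]
  rw [this, (PiLp.volume_preserving_ofLp (Fin n)).measure_preimage
    (MeasurableSet.univ_pi fun _ => measurableSet_Ioo).nullMeasurableSet, Real.volume_pi_Ioo]
  exact ENNReal.prod_lt_top fun _ _ => ENNReal.ofReal_lt_top

theorem exists_abs_sub_int_lt_half {x : ℝ} {k : ℕ} (hx : |x| < (2 * k + 1) / 2)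
    (hx_half : ∀ t : ℤ, x ≠ t + 1 / 2) :
    ∃ t ∈ Finset.Icc (-(k : ℤ)) k, |x - t| < 1 / 2 := by
  have hround := abs_sub_round x
  refine ⟨round x, ?_, hround.lt_of_ne fun h => ?_⟩
  · rw [abs_le] at hround
    rw [abs_lt] at hx
    have hlo : -(k : ℤ) - 1 < round x := by
      have : (-(k : ℤ) - 1 : ℝ) < round x := by push_cast; linarith
      exact_mod_cast this
    have hhi : round x < (k : ℤ) + 1 := by
      have : (round x : ℝ) < (k : ℤ) + 1 := by push_cast; linarith
      exact_mod_cast this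
    rw [Finset.mem_Icc]
    omega
  · rcases (abs_eq (by norm_num)).1 h with h | h
    · exact hx_half (round x) (by linarith)
    · exact hx_half (round x - 1) (by push_cast; linarith)

theorem pairwiseDisjoint_preimage_sub_centeredBox {b : Fin n → ℝ} {j : Fin n}
    (hbj : b j = 1 / 2) :
    (univ : Set ℤ).PairwiseDisjoint
      fun t => (· - (t : ℝ) • EuclideanSpace.single j 1) ⁻¹' centeredBox b := by
  intro t _ t' _ htt'
  refine Set.disjoint_left.2 fun y hy hy' => htt' ?_
  have h₁ := (mem_preimage_sub_centeredBox.1 hy).1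
  have h₂ := (mem_preimage_sub_centeredBox.1 hy').1
  rw [hbj, abs_lt] at h₁ h₂
  have hlt : (t : ℝ) < t' + 1 ∧ (t' : ℝ) < t + 1 := by constructor <;> linarith
  have : t < t' + 1 ∧ t' < t + 1 := by exact_mod_cast hlt
  omega

theorem centeredBox_update_ae_eq_biUnion (k : ℕ) {b : Fin n → ℝ} {j : Fin n}
    (hbj : b j = 1 / 2) :
    centeredBox (Function.update b j ((2 * k + 1) / 2)) =ᵐ[volume]
      ⋃ t ∈ Finset.Icc (-(k : ℤ)) k,
        (· - (t : ℝ) • EuclideanSpace.single j 1) ⁻¹' centeredBox b := by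
  refine eventuallyEq_set.2 ?_
  filter_upwards [ae_all_iff.2 fun t : ℤ => ae_apply_ne j ((t : ℝ) + 1 / 2)] with y hy
  simp only [mem_iUnion, exists_prop]
  constructor
  · intro hyA
    obtain ⟨hj, hb⟩ := mem_centeredBox_update.1 hyA
    obtain ⟨t, ht, hyt⟩ := exists_abs_sub_int_lt_half hj hy
    exact ⟨t, ht, mem_preimage_sub_centeredBox.2 ⟨hbj ▸ hyt, hb⟩⟩
  · rintro ⟨t, ht, hyU⟩
    obtain ⟨hyt, hb⟩ := mem_preimage_sub_centeredBox.1 hyU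
    rw [hbj] at hyt
    rw [Finset.mem_Icc] at ht
    have ht' : |(t : ℝ)| ≤ k := abs_le.2 ⟨by exact_mod_cast ht.1, by exact_mod_cast ht.2⟩
    have := abs_sub_abs_le_abs_sub (y j) t
    exact mem_centeredBox_update.2 ⟨by linarith, hb⟩

theorem setLIntegral_preimage_sub_zsmul_single {f : EuclideanSpace ℝ (Fin n) → ℝ≥0∞}
    {j : Fin n} (hper : ∀ y, f (y + EuclideanSpace.single j 1) = f y) (t : ℤ)
    {A : Set (EuclideanSpace ℝ (Fin n))} (hA : MeasurableSet A) :
    ∫⁻ y in (· - (t : ℝ) • EuclideanSpace.single j 1) ⁻¹' A, f y =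
      ∫⁻ y in A, f y := by
  set v := (t : ℝ) • EuclideanSpace.single j (1 : ℝ)
  have hper_int (y) : f (y + v) = f y := by
    have hP : Function.Periodic (fun s : ℝ => f (y + s • EuclideanSpace.single j 1)) 1 :=
      fun s => by simp only [add_smul, one_smul, ← add_assoc, hper]
    simpa using hP.int_mul t 0
  have := (measurePreserving_sub_right volume v).setLIntegral_comp_preimage_emb
    (MeasurableEquiv.subRight v).measurableEmbedding (fun z => f (z + v)) A
  simp only [sub_add_cancel] at this
  exact this.trans (setLIntegral_congr_fun hA fun y _ => hper_int y)

theorem lintegral_centeredBox_update_of_periodic (k : ℕ)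
    {f : EuclideanSpace ℝ (Fin n) → ℝ≥0∞} {j : Fin n}
    (hper : ∀ y, f (y + EuclideanSpace.single j 1) = f y) {b : Fin n → ℝ}
    (hbj : b j = 1 / 2) :
    ∫⁻ y in centeredBox (Function.update b j ((2 * k + 1) / 2)), f y =
      (2 * k + 1 : ℝ≥0∞) * ∫⁻ y in centeredBox b, f y := by
  rw [setLIntegral_congr (centeredBox_update_ae_eq_biUnion k hbj),
    lintegral_biUnion_finset ((pairwiseDisjoint_preimage_sub_centeredBox hbj).subset
      (subset_univ _)) (fun _ _ => (measurableSet_centeredBox b).preimage (measurable_sub_const _)),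
    Finset.sum_congr rfl fun t _ =>
      setLIntegral_preimage_sub_zsmul_single hper t (measurableSet_centeredBox b),
    Finset.sum_const, Int.card_Icc, nsmul_eq_mul,
    show (k + 1 - -(k : ℤ)).toNat = 2 * k + 1 by omega]
  push_cast
  rfl

theorem lintegral_centeredBox_piecewise_of_periodic (k : ℕ)
    {f : EuclideanSpace ℝ (Fin n) → ℝ≥0∞} (s : Finset (Fin n))
    (hper : ∀ j ∈ s, ∀ y, f (y + EuclideanSpace.single j 1) = f y)
    {b : Fin n → ℝ} (hb : ∀ j ∈ s, b j = 1 / 2) :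
    ∫⁻ y in centeredBox (s.piecewise (fun _ => (2 * k + 1) / 2) b), f y =
      (2 * k + 1 : ℝ≥0∞) ^ s.card * ∫⁻ y in centeredBox b, f y := by
  induction s using Finset.induction with
  | empty => simp
  | @insert j s hj ih =>
    rw [Finset.piecewise_insert, lintegral_centeredBox_update_of_periodic k
        (hper j (Finset.mem_insert_self j s))
        (by rw [Finset.piecewise_eq_of_notMem _ _ _ hj, hb j (Finset.mem_insert_self j s)]),
      ih (fun i hi => hper i (Finset.mem_insert_of_mem hi))
        (fun i hi => hb i (Finset.mem_insert_of_mem hi)),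
      Finset.card_insert_of_notMem hj, pow_succ]
    ring

end Boxes

section Slab

variable {N : ℕ}

def slab (N : ℕ) (c : ℝ) : Set (EuclideanSpace ℝ (Fin (N + 1))) :=
  {x | |x (Fin.last N)| ≤ 1 / (2 * c)}

theorem measurableSet_slab (c : ℝ) : MeasurableSet (slab N c) :=
  measurableSet_le (by fun_prop) measurable_const

theorem slab_inter_centeredBox_ae_eq {c : ℝ} (hc : 1 ≤ c) :
    (slab N c ∩ centeredBox fun _ => 1 / 2 : Set (EuclideanSpace ℝ (Fin (N + 1)))) =ᵐ[volume]
      (c • ·) ⁻¹' centeredBox (Function.update (fun _ => c / 2) (Fin.last N) (1 / 2)) := by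
  have hc0 : 0 < c := by linarith
  refine eventuallyEq_set.2 ?_
  filter_upwards [ae_apply_ne (Fin.last N) (1 / (2 * c)),
    ae_apply_ne (Fin.last N) (-(1 / (2 * c)))] with y hy₁ hy₂
  have hstrict : |y (Fin.last N)| ≤ 1 / (2 * c) ↔ |y (Fin.last N)| < 1 / (2 * c) :=
    ⟨fun h => h.lt_of_ne fun h' => ((abs_eq (by positivity)).1 h').elim hy₁ hy₂, le_of_lt⟩
  have hlast : |y (Fin.last N)| < 1 / (2 * c) ↔ |c * y (Fin.last N)| < 1 / 2 := by
    rw [abs_mul, abs_of_pos hc0, ← lt_div_iff₀' hc0, div_div]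
  have hother (a : ℝ) : |c * a| < c / 2 ↔ |a| < 1 / 2 := by
    rw [abs_mul, abs_of_pos hc0, div_eq_mul_one_div, mul_lt_mul_iff_right₀ hc0]
  have hhalf : 1 / (2 * c) ≤ 1 / 2 := by gcongr; linarith
  simp only [slab, mem_inter_iff, mem_ofPred_eq, mem_preimage, mem_centeredBox_update,
    PiLp.smul_apply, smul_eq_mul, hother, hstrict, ← hlast]
  refine ⟨fun ⟨hs, hb⟩ => ⟨hs, fun i _ => hb i⟩,
    fun ⟨hs, hb⟩ => ⟨hs, fun i => ?_⟩⟩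
  by_cases hi : i = Fin.last N
  · subst hi
    exact hs.trans_le hhalf
  · exact hb i hi

theorem lintegral_slab_rescale_of_periodic (k : ℕ)
    {H : EuclideanSpace ℝ (Fin (N + 1)) → ℝ≥0∞}
    (hper : ∀ i ≠ Fin.last N, ∀ y, H (y + EuclideanSpace.single i 1) = H y) :
    ∫⁻ x in slab N (2 * k + 1) ∩ centeredBox (fun _ => 1 / 2),
        ENNReal.ofReal (2 * k + 1) * H ((2 * k + 1 : ℝ) • x) =
      ∫⁻ x in centeredBox (fun _ => 1 / 2), H x := by
  set c : ℝ := 2 * k + 1 with hc_def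
  have hc : 1 ≤ c := by simp [c]
  have hbox : (Finset.univ.erase (Fin.last N)).piecewise (fun _ => c / 2) (fun _ => 1 / 2) =
      Function.update (fun _ => c / 2) (Fin.last N) (1 / 2) := by
    ext i
    by_cases hi : i = Fin.last N <;> simp [hi]
  have htile := lintegral_centeredBox_piecewise_of_periodic k (Finset.univ.erase (Fin.last N))
    (fun i hi => hper i (Finset.ne_of_mem_erase hi)) (b := fun _ => 1 / 2) (fun _ _ => rfl)
  rw [Finset.card_erase_of_mem (Finset.mem_univ _), Finset.card_univ, Fintype.card_fin,
    Nat.add_sub_cancel, hbox] at htile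
  have hscale : ENNReal.ofReal c *
      (ENNReal.ofReal |(c ^ (N + 1))⁻¹| * (2 * k + 1 : ℝ≥0∞) ^ N) = 1 := by
    have : (2 * k + 1 : ℝ≥0∞) = ENNReal.ofReal c := by
      rw [hc_def, show (2 * k + 1 : ℝ) = ((2 * k + 1 : ℕ) : ℝ) by push_cast; rfl,
        ENNReal.ofReal_natCast]
      push_cast; rfl
    rw [this, ← ENNReal.ofReal_pow (by positivity), ← ENNReal.ofReal_mul (by positivity),
      ← ENNReal.ofReal_mul (by positivity), abs_of_pos (by positivity), pow_succ]
    field_simp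
    exact ENNReal.ofReal_one
  set B := centeredBox (Function.update (fun _ => c / 2) (Fin.last N) (1 / 2))
  calc ∫⁻ x in slab N c ∩ centeredBox (fun _ => 1 / 2), ENNReal.ofReal c * H (c • x)
      = ∫⁻ x in (c • ·) ⁻¹' B, ENNReal.ofReal c * H (c • x) :=
        setLIntegral_congr (slab_inter_centeredBox_ae_eq hc)
    _ = ENNReal.ofReal c * (ENNReal.ofReal |(c ^ (N + 1))⁻¹| * ∫⁻ y in B, H y) := by
        rw [lintegral_const_mul' _ _ ENNReal.ofReal_ne_top,
          setLIntegral_comp_smul_preimage volume (by positivity), finrank_euclideanSpace_fin]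
    _ = ∫⁻ x in centeredBox (fun _ => 1 / 2), H x := by
        rw [htile, ← mul_assoc, ← mul_assoc, mul_assoc _ _ (_ ^ N), hscale, one_mul]

theorem tendsto_volume_restrict_slab {A : Set (EuclideanSpace ℝ (Fin (N + 1)))}
    (hA : volume A ≠ ∞) :
    Tendsto (fun k : ℕ => volume.restrict A (slab N (2 * k + 1))) atTop (𝓝 0) := by
  have hanti : Antitone fun k : ℕ => slab N (2 * k + 1) := fun k k' hkk' x hx =>
    show |x (Fin.last N)| ≤ 1 / (2 * (2 * (k : ℝ) + 1)) from hx.trans (by gcongr)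
  have hinter : (⋂ k : ℕ, slab N (2 * k + 1)) ⊆ {x | x (Fin.last N) = 0} := by
    intro x hx
    simp only [mem_iInter, slab, mem_ofPred_eq] at hx
    by_contra hx0
    obtain ⟨k, hk⟩ := exists_nat_one_div_lt (abs_pos.2 hx0)
    have : 1 / (2 * (2 * k + 1 : ℝ)) ≤ 1 / (k + 1) := by gcongr; linarith
    linarith [hx k]
  have hnull : volume.restrict A (⋂ k : ℕ, slab N (2 * k + 1)) = 0 :=
    measure_mono_null hinter
      (measure_eq_zero_iff_ae_notMem.2 (ae_restrict_of_ae (ae_apply_ne (Fin.last N) 0)))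
  have hfin : volume.restrict A (slab N 1) ≠ ∞ :=
    ((measure_mono (subset_univ _)).trans_lt
      (by rwa [Measure.restrict_apply_univ, lt_top_iff_ne_top])).ne
  rw [← hnull]
  exact tendsto_measure_iInter_atTop (fun k => (measurableSet_slab _).nullMeasurableSet) hanti
    ⟨0, by simpa using hfin⟩

theorem lintegral_enorm_rpow_indicator_slab {F : Type*} [NormedAddCommGroup F] [NormedSpace ℝ F]
    {p : ℝ} (hp : 0 < p) {φ : EuclideanSpace ℝ (Fin (N + 1)) → F}
    (hper : ∀ i ≠ Fin.last N, ∀ y, φ (y + EuclideanSpace.single i 1) = φ y) (k : ℕ) :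
    ∫⁻ x in centeredBox (fun _ => 1 / 2),
        ‖(slab N (2 * k + 1)).indicator
          (fun x => (2 * k + 1 : ℝ) ^ (1 / p) • φ ((2 * k + 1 : ℝ) • x)) x‖ₑ ^ p =
      ∫⁻ x in centeredBox (fun _ => 1 / 2), ‖φ x‖ₑ ^ p := by
  have hpt (x) : ‖(slab N (2 * k + 1)).indicator
        (fun x => (2 * k + 1 : ℝ) ^ (1 / p) • φ ((2 * k + 1 : ℝ) • x)) x‖ₑ ^ p =
      (slab N (2 * k + 1)).indicator
        (fun x => ENNReal.ofReal (2 * k + 1) * ‖φ ((2 * k + 1 : ℝ) • x)‖ₑ ^ p) x := by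
    by_cases hx : x ∈ slab N (2 * k + 1)
    · rw [indicator_of_mem hx, indicator_of_mem hx, enorm_smul,
        ENNReal.mul_rpow_of_nonneg _ _ hp.le, Real.enorm_eq_ofReal (by positivity),
        ENNReal.ofReal_rpow_of_nonneg (by positivity) hp.le, one_div,
        Real.rpow_inv_rpow (by positivity) hp.ne']
    · simp [indicator_of_notMem hx, hp]
  rw [lintegral_congr hpt, lintegral_indicator (measurableSet_slab _),
    Measure.restrict_restrict (measurableSet_slab _)]
  exact lintegral_slab_rescale_of_periodic (H := fun y => ‖φ y‖ₑ ^ p) k fun i hi y => by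
    rw [hper i hi y]

end Slab

theorem concentrating_sequence_weak_null_general {N m : ℕ} (p : ℝ) (hp : 1 < p)
    (Q : Set (EuclideanSpace ℝ (Fin (N + 1))))
    (hQ : Q = {x : EuclideanSpace ℝ (Fin (N + 1)) | ∀ i, |x i| < 1 / 2})
    (φ : EuclideanSpace ℝ (Fin (N + 1)) → EuclideanSpace ℝ (Fin m))
    (hφ_meas : Measurable φ)
    (hφ_Lp : MemLp φ (ENNReal.ofReal p) (volume.restrict Q))
    -- 1-periodicity in the first N variables
    (hφ_per : ∀ i : Fin (N + 1), i ≠ Fin.last N →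
      ∀ x, φ (x + EuclideanSpace.single i (1 : ℝ)) = φ x)
    (w : ℕ → EuclideanSpace ℝ (Fin (N + 1)) → EuclideanSpace ℝ (Fin m))
    (hw : ∀ k x, w k x =
      if |x (Fin.last N)| ≤ 1 / (2 * (2 * (k : ℝ) + 1)) then
        ((2 * (k : ℝ) + 1) ^ (1 / p)) • φ ((2 * (k : ℝ) + 1) • x)
      else 0) :
    (∃ Cb : ℝ, ∀ k, (∫ x in Q, ‖w k x‖ ^ p) ≤ Cb) ∧
      ∀ g : EuclideanSpace ℝ (Fin (N + 1)) → EuclideanSpace ℝ (Fin m),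
        MemLp g (ENNReal.ofReal (p / (p - 1))) (volume.restrict Q) →
        Tendsto (fun k => ∫ x in Q, ⟪w k x, g x⟫) atTop (nhds 0) := by
  have hp0 : 0 < p := zero_lt_one.trans hp
  have hw_eq (k : ℕ) : w k = (slab N (2 * k + 1)).indicator
      fun x => (2 * k + 1 : ℝ) ^ (1 / p) • φ ((2 * k + 1 : ℝ) • x) := by
    ext1 x
    simp only [hw, indicator_apply, slab, mem_ofPred_eq]
  have hw_meas (k : ℕ) : Measurable (w k) := by
    rw [hw_eq k]
    exact Measurable.indicator (by fun_prop) (measurableSet_slab _)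
  have hw_lintegral (k : ℕ) :
      ∫⁻ x in Q, ‖w k x‖ₑ ^ p = ∫⁻ x in Q, ‖φ x‖ₑ ^ p := by
    rw [hw_eq k, hQ]
    exact lintegral_enorm_rpow_indicator_slab hp0 hφ_per k
  refine ⟨⟨(∫⁻ x in Q, ‖φ x‖ₑ ^ p).toReal, fun k => ?_⟩, fun g hg => ?_⟩
  · rw [integral_norm_rpow_eq_toReal_lintegral hp0.le (hw_meas k).aestronglyMeasurable,
      hw_lintegral k]
  have : (ENNReal.ofReal p).HolderConjugate (ENNReal.ofReal (p / (p - 1))) :=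
    (Real.HolderConjugate.conjExponent hp).ennrealOfReal
  have hw_eLpNorm (k : ℕ) : eLpNorm (w k) (ENNReal.ofReal p) (volume.restrict Q) =
      eLpNorm φ (ENNReal.ofReal p) (volume.restrict Q) := by
    simp only [eLpNorm_eq_lintegral_rpow_enorm_toReal (ENNReal.ofReal_pos.2 hp0).ne'
      ENNReal.ofReal_ne_top, ENNReal.toReal_ofReal hp0.le, hw_lintegral k]
  have hQ_fin : volume Q ≠ ∞ := by
    rw [hQ]
    exact (volume_centeredBox_lt_top fun _ => 1 / 2).ne
  exact tendsto_integral_inner_zero_of_support_subset ENNReal.ofReal_ne_top hφ_Lp.eLpNorm_ne_top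
    (fun k => (hw_meas k).aestronglyMeasurable) (fun k => (hw_eLpNorm k).le)
    (fun k => hw_eq k ▸ support_indicator_subset) (fun _ => measurableSet_slab _)
    (tendsto_volume_restrict_slab hQ_fin) hg

/-- the concentrating rescaled sequence
`w_k(x) = (2k+1)^{1/p} φ((2k+1)x)` on the strip `{|x_N| ≤ 1/(2(2k+1))}`, `0` outside,
is bounded in `L^p(Q;ℝ^m)` and converges weakly to `0` in `L^p(Q;ℝ^m)`. -/
theorem concentrating_sequence_weak_null {N m : ℕ} (p : ℝ) (hp : 1 < p)
    (Q : Set (EuclideanSpace ℝ (Fin (N + 1))))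
    (hQ : Q = {x : EuclideanSpace ℝ (Fin (N + 1)) | ∀ i, |x i| < 1 / 2})
    (φ : EuclideanSpace ℝ (Fin (N + 1)) → EuclideanSpace ℝ (Fin m))
    (hφ_meas : Measurable φ)
    (hφ_Lp : MemLp φ (ENNReal.ofReal p) (volume.restrict Q))
    (hφ_mean : (∫ x in Q, φ x) = 0)
    -- 1-periodicity in the first N variables
    (hφ_per : ∀ i : Fin (N + 1), i ≠ Fin.last N →
      ∀ x, φ (x + EuclideanSpace.single i (1 : ℝ)) = φ x)
    (w : ℕ → EuclideanSpace ℝ (Fin (N + 1)) → EuclideanSpace ℝ (Fin m))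
    (hw : ∀ k x, w k x =
      if |x (Fin.last N)| ≤ 1 / (2 * (2 * (k : ℝ) + 1)) then
        ((2 * (k : ℝ) + 1) ^ (1 / p)) • φ ((2 * (k : ℝ) + 1) • x)
      else 0) :
    (∃ Cb : ℝ, ∀ k, (∫ x in Q, ‖w k x‖ ^ p) ≤ Cb) ∧
      ∀ g : EuclideanSpace ℝ (Fin (N + 1)) → EuclideanSpace ℝ (Fin m),
        MemLp g (ENNReal.ofReal (p / (p - 1))) (volume.restrict Q) →
        Tendsto (fun k => ∫ x in Q, ⟪w k x, g x⟫) atTop (nhds 0) :=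
  concentrating_sequence_weak_null_general p hp Q hQ φ hφ_meas hφ_Lp hφ_per w hw
end

section
/- Let f : Ω × ℝ^d × ℝ^m × ℝ^(d×N) → [0,∞) satisfy (H1)_p, and suppose there exist c' > 0, L > 0, 0 < τ ≤ 1 such that whenever t|ξ| + t|b|^p > L one has |f(x,u,t^{1/p}b,tξ)/t − f_p^∞(x,u,b,ξ)| ≤ c'(|b|^{(1−τ)p} + |ξ|^{1−τ})/t^τ (hypothesis (H3)_p). Then there exists a constant C such that |f_p^∞(x,u,b,ξ) − f(x,u,b,ξ)| ≤ C(1 + |b|^{(1−τ)p} + |ξ|^{1−τ}) for every (x,u,b,ξ). -/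
open Filter

/-- The (p,1)-recession function of `f`, defined as a pointwise limsup. -/
noncomputable def recP {N d m : ℕ} (p : ℝ)
    (f : EuclideanSpace ℝ (Fin N) → EuclideanSpace ℝ (Fin d) →
      EuclideanSpace ℝ (Fin m) →
      (EuclideanSpace ℝ (Fin N) →L[ℝ] EuclideanSpace ℝ (Fin d)) → ℝ)
    (x : EuclideanSpace ℝ (Fin N)) (u : EuclideanSpace ℝ (Fin d))
    (b : EuclideanSpace ℝ (Fin m))
    (ξ : EuclideanSpace ℝ (Fin N) →L[ℝ] EuclideanSpace ℝ (Fin d)) : ℝ :=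
  limsup (fun t : ℝ => f x u ((t ^ (1 / p)) • b) (t • ξ) / t) atTop

/-- under (H1)_p and (H3)_p, the recession function is globally close
to `f`: `|f_p^∞ − f| ≤ C(1 + ‖b‖^{(1−τ)p} + ‖ξ‖^{1−τ})`. -/
theorem recession_close_to_f {N d m : ℕ} (p : ℝ) (hp : 1 < p)
    (Ω : Set (EuclideanSpace ℝ (Fin N))) (hΩo : IsOpen Ω)
    (hΩb : Bornology.IsBounded Ω)
    (f : EuclideanSpace ℝ (Fin N) → EuclideanSpace ℝ (Fin d) →
      EuclideanSpace ℝ (Fin m) →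
      (EuclideanSpace ℝ (Fin N) →L[ℝ] EuclideanSpace ℝ (Fin d)) → ℝ)
    (hf_nonneg : ∀ x u b ξ, 0 ≤ f x u b ξ)
    -- (H1)_p
    (C : ℝ) (hC : 0 < C)
    (H1lb : ∀ x ∈ Ω, ∀ u b ξ, (1 / C) * (‖b‖ ^ p + ‖ξ‖) - C ≤ f x u b ξ)
    (H1ub : ∀ x ∈ Ω, ∀ u b ξ, f x u b ξ ≤ C * (1 + ‖b‖ ^ p + ‖ξ‖))
    -- (H3)_p
    (c' L τ : ℝ) (hc' : 0 < c') (hL : 0 < L) (hτ0 : 0 < τ) (hτ1 : τ ≤ 1)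
    (H3 : ∀ x ∈ Ω, ∀ u b ξ, ∀ t : ℝ, 0 < t → L < t * ‖ξ‖ + t * ‖b‖ ^ p →
      |f x u ((t ^ (1 / p)) • b) (t • ξ) / t - recP p f x u b ξ| ≤
        c' * (‖b‖ ^ ((1 - τ) * p) + ‖ξ‖ ^ (1 - τ)) / t ^ τ) :
    ∃ C' : ℝ, ∀ x ∈ Ω, ∀ u b ξ,
      |recP p f x u b ξ - f x u b ξ| ≤
        C' * (1 + ‖b‖ ^ ((1 - τ) * p) + ‖ξ‖ ^ (1 - τ)) := by
  refine ⟨c' + C * (1 + L), fun x hx u b ξ => ?_⟩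
  have hb0 : (0:ℝ) ≤ ‖b‖ ^ ((1 - τ) * p) := Real.rpow_nonneg (norm_nonneg _) _
  have hξ0 : (0:ℝ) ≤ ‖ξ‖ ^ (1 - τ) := Real.rpow_nonneg (norm_nonneg _) _
  have hbp0 : (0:ℝ) ≤ ‖b‖ ^ p := Real.rpow_nonneg (norm_nonneg _) _
  have hp0 : (0:ℝ) < p := lt_trans zero_lt_one hp
  by_cases hcase : L < ‖ξ‖ + ‖b‖ ^ p
  · have h := H3 x hx u b ξ 1 one_pos (by simpa using hcase)
    rw [Real.one_rpow, one_smul, one_smul, div_one, Real.one_rpow, div_one] at h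
    rw [abs_sub_comm]
    calc |f x u b ξ - recP p f x u b ξ|
        ≤ c' * (‖b‖ ^ ((1 - τ) * p) + ‖ξ‖ ^ (1 - τ)) := h
      _ ≤ (c' + C * (1 + L)) * (1 + ‖b‖ ^ ((1 - τ) * p) + ‖ξ‖ ^ (1 - τ)) := by
          nlinarith [mul_pos hC hL]
  · push_neg at hcase
    set M : ℝ := C * (1 + L) with hM
    have hM0 : 0 < M := by nlinarith
    have hfub : f x u b ξ ≤ M := by
      have := H1ub x hx u b ξ
      nlinarith
    have hev : ∀ᶠ t : ℝ in atTop,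
        f x u ((t ^ (1 / p)) • b) (t • ξ) / t ∈ Set.Icc (0:ℝ) M := by
      filter_upwards [eventually_ge_atTop (1:ℝ)] with t ht
      have ht0 : (0:ℝ) < t := lt_of_lt_of_le one_pos ht
      have hnb : ‖(t ^ (1 / p)) • b‖ ^ p = t * ‖b‖ ^ p := by
        rw [norm_smul, Real.norm_eq_abs, abs_of_nonneg (Real.rpow_nonneg ht0.le _),
          Real.mul_rpow (Real.rpow_nonneg ht0.le _) (norm_nonneg _),
          ← Real.rpow_mul ht0.le, one_div_mul_cancel hp0.ne', Real.rpow_one]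
      have hnξ : ‖t • ξ‖ = t * ‖ξ‖ := by
        rw [norm_smul t ξ, Real.norm_eq_abs, abs_of_nonneg ht0.le]
      have hub := H1ub x hx u ((t ^ (1 / p)) • b) (t • ξ)
      rw [hnb, hnξ] at hub
      constructor
      · exact div_nonneg (hf_nonneg _ _ _ _) ht0.le
      · rw [div_le_iff₀ ht0]
        have h1 : C * (t * ‖b‖ ^ p) + C * (t * ‖ξ‖) ≤ C * t * L := by
          have := mul_le_mul_of_nonneg_left hcase (mul_pos hC ht0).le
          nlinarith
        nlinarith
    have hrub : recP p f x u b ξ ≤ M := by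
      refine limsup_le_of_le (isCoboundedUnder_le_of_eventually_le _
        (hev.mono fun t ht => ht.1)) (hev.mono fun t ht => ht.2)
    have hrlb : 0 ≤ recP p f x u b ξ := by
      refine le_limsup_of_frequently_le ((hev.mono fun t ht => ht.1).frequently)
        ⟨M, eventually_map.2 (hev.mono fun t ht => ht.2)⟩
    have habs : |recP p f x u b ξ - f x u b ξ| ≤ M := by
      rw [abs_le]
      constructor <;> linarith [hf_nonneg x u b ξ]
    calc |recP p f x u b ξ - f x u b ξ| ≤ M := habs
      _ ≤ (c' + C * (1 + L)) * (1 + ‖b‖ ^ ((1 - τ) * p) + ‖ξ‖ ^ (1 - τ)) := by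
          nlinarith
end
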